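/- arXiv:2005.08169 — 4 statements merged into one kernel-verified Lean document; each statement's English description precedes it below -/
import Mathlib

section
/- Let G be a graph of order n. Then there exists a subset T ⊆ V(G) with |T| ≤ β(G) such that β(G) = (n - o(G - T) + |T|)/2, where o(G - T) is the number of odd components of G - T; moreover each odd component of G - T is factor-critical and each even component of G - T has a perfect matching. -/
/-!
Induct on a finite vertex set `A`. If some vertex of `A` is covered by every maximum matching
of `G[A]`, deleting it lowers the matching number by exactly one, and it goes into `T`.
Otherwise every vertex is missed by some maximum matching, and Gallai's lemma says that then
no maximum matching misses two vertices of the same component of `G[A]`. So every component is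
factor-critical, hence odd, a maximum matching misses exactly one vertex in each, and `T = ∅`
satisfies the formula. Gallai's lemma in turn comes from exchanging two maximum matchings
along an alternating path.
-/

open SimpleGraph

/-- `H` is a minor of `G`: disjoint nonempty connected branch sets, one per vertex of `H`,
with an edge of `G` between branch sets corresponding to each edge of `H`. -/
def HasMinor {V W : Type*} (G : SimpleGraph V) (H : SimpleGraph W) : Prop :=
  ∃ f : W → Set V,
    (∀ w, (f w).Nonempty) ∧
    (∀ w, (G.induce (f w)).Connected) ∧
    (Pairwise fun w₁ w₂ => Disjoint (f w₁) (f w₂)) ∧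
    ∀ ⦃w₁ w₂⦄, H.Adj w₁ w₂ → ∃ v₁ ∈ f w₁, ∃ v₂ ∈ f w₂, G.Adj v₁ v₂

/-- A graph is outerplanar iff it has no `K₄`-minor and no `K_{2,3}`-minor. -/
def Outerplanar {V : Type*} (G : SimpleGraph V) : Prop :=
  ¬ HasMinor G (completeGraph (Fin 4)) ∧
  ¬ HasMinor G (completeBipartiteGraph (Fin 2) (Fin 3))

/-- A maximal outerplanar graph: outerplanar and no edge can be added keeping outerplanarity. -/
def MaximalOuterplanar {V : Type*} (G : SimpleGraph V) : Prop :=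
  Outerplanar G ∧ ∀ u v : V, u ≠ v → ¬ G.Adj u v →
    ¬ Outerplanar (G ⊔ fromEdgeSet {s(u, v)})

/-- `M` is a matching (a set of pairwise disjoint edges) of the graph `G`. -/
def IsMatchingSet {V : Type*} (G : SimpleGraph V) (M : Finset (Sym2 V)) : Prop :=
  (∀ e ∈ M, e ∈ G.edgeSet) ∧
  ∀ e ∈ M, ∀ f ∈ M, e ≠ f → ∀ v : V, v ∈ e → v ∉ f

/-- `M` is a rainbow matching of size `k` in `G` under edge-coloring `c`. -/
def IsRainbowMatching {V : Type*} (G : SimpleGraph V) (c : Sym2 V → ℕ) (k : ℕ)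
    (M : Finset (Sym2 V)) : Prop :=
  IsMatchingSet G M ∧ M.card = k ∧ Set.InjOn c ↑M

/-- The matching number of `G`. -/
noncomputable def matchingNumber {V : Type*} (G : SimpleGraph V) : ℕ :=
  sSup {k | ∃ M : Finset (Sym2 V), IsMatchingSet G M ∧ M.card = k}

/-- The vertex set (in `V`) of a connected component of `G - T`. -/
def compSupp {V : Type*} (G : SimpleGraph V) (T : Finset V)
    (c : (G.induce ((↑T : Set V)ᶜ)).ConnectedComponent) : Set V :=
  Subtype.val '' c.supp

/-- The number of odd components of `G - T`. -/
noncomputable def oddComponents {V : Type*} (G : SimpleGraph V) (T : Finset V) : ℕ :=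
  {c : (G.induce ((↑T : Set V)ᶜ)).ConnectedComponent | Odd (compSupp G T c).ncard}.ncard

/-- `G` has a matching whose edges lie in `S` and which covers every vertex of `S`. -/
def HasPerfectMatchingOn {V : Type*} (G : SimpleGraph V) (S : Set V) : Prop :=
  ∃ M : Finset (Sym2 V), IsMatchingSet G M ∧
    (∀ e ∈ M, ∀ v : V, v ∈ e → v ∈ S) ∧ ∀ v ∈ S, ∃ e ∈ M, v ∈ e


section

variable {V : Type*} {G : SimpleGraph V}

def coveredVerts (M : Finset (Sym2 V)) : Set V := {v | ∃ e ∈ M, v ∈ e}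

lemma mem_coveredVerts {M : Finset (Sym2 V)} {v : V} : v ∈ coveredVerts M ↔ ∃ e ∈ M, v ∈ e :=
  Iff.rfl

lemma coveredVerts_insert [DecidableEq V] (M : Finset (Sym2 V)) (u w : V) :
    coveredVerts (insert s(u, w) M) = insert u (insert w (coveredVerts M)) := by
  ext x
  simp only [mem_coveredVerts, Finset.mem_insert, Set.mem_insert_iff, exists_eq_or_imp,
    Sym2.mem_iff, or_assoc]

lemma card_insert_of_notMem_coveredVerts [DecidableEq V] {M : Finset (Sym2 V)} {u : V}
    (hu : u ∉ coveredVerts M) (w : V) : (insert s(u, w) M).card = M.card + 1 :=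
  Finset.card_insert_of_notMem fun h => hu ⟨_, h, Sym2.mem_mk_left u w⟩

namespace IsMatchingSet

variable {M N : Finset (Sym2 V)}

lemma eq_of_mem_of_mem (hM : IsMatchingSet G M) {e f : Sym2 V} (he : e ∈ M) (hf : f ∈ M)
    {v : V} (hve : v ∈ e) (hvf : v ∈ f) : e = f :=
  by_contra fun hef => hM.2 e he f hf hef v hve hvf

lemma mono (hM : IsMatchingSet G M) (hNM : N ⊆ M) : IsMatchingSet G N :=
  ⟨fun e he => hM.1 e (hNM he), fun e he f hf => hM.2 e (hNM he) f (hNM hf)⟩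

lemma exists_adj (hM : IsMatchingSet G M) {v : V} (hv : v ∈ coveredVerts M) :
    ∃ w, s(v, w) ∈ M ∧ G.Adj v w := by
  obtain ⟨e, he, hve⟩ := hv
  obtain ⟨w, rfl⟩ := Sym2.mem_iff_exists.mp hve
  exact ⟨w, he, hM.1 _ he⟩

lemma insert_mk [DecidableEq V] (hM : IsMatchingSet G M) {u w : V} (huw : G.Adj u w)
    (hu : u ∉ coveredVerts M) (hw : w ∉ coveredVerts M) :
    IsMatchingSet G (insert s(u, w) M) := by
  have fresh : ∀ e ∈ M, ∀ v ∈ s(u, w), v ∉ e := by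
    rintro e he v hv hve
    rcases Sym2.mem_iff.mp hv with rfl | rfl
    exacts [hu ⟨e, he, hve⟩, hw ⟨e, he, hve⟩]
  refine ⟨?_, ?_⟩
  · simpa [Finset.forall_mem_insert] using ⟨huw, hM.1⟩
  · intro e he f hf hef v hve hvf
    rcases Finset.mem_insert.mp he with rfl | he <;> rcases Finset.mem_insert.mp hf with rfl | hf
    exacts [hef rfl, fresh f hf v hve hvf, fresh e he v hvf hve, hM.2 e he f hf hef v hve hvf]

lemma coveredVerts_erase [DecidableEq V] (hM : IsMatchingSet G M) {u w : V}
    (he : s(u, w) ∈ M) : coveredVerts (M.erase s(u, w)) = coveredVerts M \ {u, w} := by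
  ext x
  simp only [mem_coveredVerts, Finset.mem_erase, Set.mem_sdiff, Set.mem_insert_iff,
    Set.mem_singleton_iff]
  constructor
  · rintro ⟨f, ⟨hfe, hf⟩, hxf⟩
    refine ⟨⟨f, hf, hxf⟩, ?_⟩
    rintro (rfl | rfl)
    exacts [hfe (hM.eq_of_mem_of_mem hf he hxf (Sym2.mem_mk_left _ _)),
      hfe (hM.eq_of_mem_of_mem hf he hxf (Sym2.mem_mk_right _ _))]
  · rintro ⟨⟨f, hf, hxf⟩, hxuw⟩
    refine ⟨f, ⟨?_, hf⟩, hxf⟩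
    rintro rfl
    exact hxuw (Sym2.mem_iff.mp hxf)

lemma ncard_coveredVerts (hM : IsMatchingSet G M) : (coveredVerts M).ncard = 2 * M.card := by
  classical
  have hcov : coveredVerts M = ↑(M.biUnion Sym2.toFinset) := by
    ext v
    simp [mem_coveredVerts]
  have hdisj : (M : Set (Sym2 V)).PairwiseDisjoint Sym2.toFinset := by
    intro e he f hf hef
    simpa [Finset.disjoint_left] using hM.2 e he f hf hef
  rw [hcov, Set.ncard_coe_finset, Finset.card_biUnion hdisj,
    Finset.sum_congr rfl fun e he => Sym2.card_toFinset_of_not_isDiag e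
      (G.not_isDiag_of_mem_edgeSet (hM.1 e he)), Finset.sum_const, smul_eq_mul, mul_comm]

end IsMatchingSet

section AlternatingExchange

/-- What following the `M`–`N` alternating path from `w` (starting with an `M`-edge) yields:
if it ends with an `M`-edge, it augments `N`; otherwise it ends at an `M`-exposed vertex `x`,
and switching `M` along it moves the hole of `M` from `x` to `w`. -/
def AlternatingExchange (G : SimpleGraph V) (M N : Finset (Sym2 V)) (w : V) : Prop :=
  (∃ N', IsMatchingSet G N' ∧ coveredVerts N' ⊆ coveredVerts M ∪ coveredVerts N ∧
      N'.card = N.card + 1) ∨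
  (∃ M' x, IsMatchingSet G M' ∧ M'.card = M.card ∧ x ∈ coveredVerts N \ coveredVerts M ∧
      coveredVerts M' = insert x (coveredVerts M \ {w}))

variable {M N : Finset (Sym2 V)}

lemma AlternatingExchange.of_erase [DecidableEq V] (hM : IsMatchingSet G M)
    (hN : IsMatchingSet G N) {w w₁ w₂ : V} (hww₁M : s(w, w₁) ∈ M) (hw₁w₂N : s(w₁, w₂) ∈ N)
    (hwN : w ∉ coveredVerts N) (hw₂M : w₂ ∈ coveredVerts M)
    (h : AlternatingExchange G (M.erase s(w, w₁)) (N.erase s(w₁, w₂)) w₂) :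
    AlternatingExchange G M N w := by
  have hww₁ : G.Adj w w₁ := hM.1 _ hww₁M
  have hw₁w₂ : G.Adj w₁ w₂ := hN.1 _ hw₁w₂N
  have hwM : w ∈ coveredVerts M := ⟨_, hww₁M, Sym2.mem_mk_left _ _⟩
  have hw₁M : w₁ ∈ coveredVerts M := ⟨_, hww₁M, Sym2.mem_mk_right _ _⟩
  have hw₂N : w₂ ∈ coveredVerts N := ⟨_, hw₁w₂N, Sym2.mem_mk_right _ _⟩
  rcases h with ⟨N', hN', hN'cov, hN'card⟩ | ⟨M', x, hM', hM'card, hx, hM'cov⟩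
  · rw [hM.coveredVerts_erase hww₁M, hN.coveredVerts_erase hw₁w₂N] at hN'cov
    have hwN' : w ∉ coveredVerts N' := fun h => by grind
    have hw₁N' : w₁ ∉ coveredVerts N' := fun h => by grind
    refine .inl ⟨insert s(w, w₁) N', hN'.insert_mk hww₁ hwN' hw₁N', ?_, ?_⟩
    · rw [coveredVerts_insert]
      refine Set.insert_subset (.inl hwM) (Set.insert_subset (.inl hw₁M) ?_)
      exact hN'cov.trans (Set.union_subset_union Set.sdiff_subset Set.sdiff_subset)
    · rw [card_insert_of_notMem_coveredVerts hwN', hN'card, Finset.card_erase_add_one hw₁w₂N]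
  · rw [hM.coveredVerts_erase hww₁M, hN.coveredVerts_erase hw₁w₂N] at hx
    rw [hM.coveredVerts_erase hww₁M] at hM'cov
    have hw₁M' : w₁ ∉ coveredVerts M' := by
      rw [hM'cov]
      grind
    have hw₂M' : w₂ ∉ coveredVerts M' := by
      rw [hM'cov]
      grind
    refine .inr ⟨insert s(w₁, w₂) M', x, hM'.insert_mk hw₁w₂ hw₁M' hw₂M', ?_, ?_, ?_⟩
    · rw [card_insert_of_notMem_coveredVerts hw₁M', hM'card, Finset.card_erase_add_one hww₁M]
    · grind
    · rw [coveredVerts_insert, hM'cov]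
      ext y
      simp only [Set.mem_insert_iff, Set.mem_sdiff, Set.mem_singleton_iff]
      grind [hww₁.ne]

theorem IsMatchingSet.alternatingExchange (hM : IsMatchingSet G M) (hN : IsMatchingSet G N)
    {w : V} (hwM : w ∈ coveredVerts M) (hwN : w ∉ coveredVerts N) :
    AlternatingExchange G M N w := by
  classical
  induction M using Finset.strongInduction generalizing N w with
  | H M ih =>
  obtain ⟨w₁, hww₁M, hww₁⟩ := hM.exists_adj hwM
  have hw₁M : w₁ ∈ coveredVerts M := ⟨_, hww₁M, Sym2.mem_mk_right _ _⟩
  have hcovM₁ := hM.coveredVerts_erase hww₁M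
  have hw₁M₁ : w₁ ∉ coveredVerts (M.erase s(w, w₁)) := by simp [hcovM₁]
  by_cases hw₁N : w₁ ∈ coveredVerts N
  swap
  · refine .inl ⟨insert s(w, w₁) N, hN.insert_mk hww₁ hwN hw₁N, ?_,
      card_insert_of_notMem_coveredVerts hwN w₁⟩
    rw [coveredVerts_insert]
    exact Set.insert_subset (.inl hwM) (Set.insert_subset (.inl hw₁M) Set.subset_union_right)
  obtain ⟨w₂, hw₁w₂N, hw₁w₂⟩ := hN.exists_adj hw₁N
  have hw₂N : w₂ ∈ coveredVerts N := ⟨_, hw₁w₂N, Sym2.mem_mk_right _ _⟩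
  by_cases hw₂M : w₂ ∈ coveredVerts M
  · refine .of_erase hM hN hww₁M hw₁w₂N hwN hw₂M (ih _ (Finset.erase_ssubset hww₁M)
      (hM.mono (Finset.erase_subset _ _)) (hN.mono (Finset.erase_subset _ _)) ?_ ?_)
    · rw [hcovM₁]
      grind [hw₁w₂.ne]
    · simp [hN.coveredVerts_erase hw₁w₂N]
  · have hw₂M₁ : w₂ ∉ coveredVerts (M.erase s(w, w₁)) := fun h => hw₂M (hcovM₁ ▸ h).1
    refine .inr ⟨insert s(w₁, w₂) (M.erase s(w, w₁)), w₂,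
      (hM.mono (Finset.erase_subset _ _)).insert_mk hw₁w₂ hw₁M₁ hw₂M₁, ?_, ⟨hw₂N, hw₂M⟩, ?_⟩
    · rw [card_insert_of_notMem_coveredVerts hw₁M₁, Finset.card_erase_add_one hww₁M]
    · rw [coveredVerts_insert, hcovM₁]
      ext x
      simp only [Set.mem_insert_iff, Set.mem_sdiff, Set.mem_singleton_iff]
      grind [hww₁.ne]

end AlternatingExchange

lemma hasPerfectMatchingOn_iff {S : Set V} :
    HasPerfectMatchingOn G S ↔ ∃ M, IsMatchingSet G M ∧ coveredVerts M = S := by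
  refine exists_congr fun M => and_congr_right fun _ => ?_
  simp only [Set.ext_iff, mem_coveredVerts]
  exact ⟨fun ⟨hMS, hSM⟩ v => ⟨fun ⟨e, he, hv⟩ => hMS e he v hv, hSM v⟩,
    fun h => ⟨fun e he v hv => (h v).1 ⟨e, he, hv⟩, fun v => (h v).2⟩⟩

lemma HasPerfectMatchingOn.even_ncard {S : Set V} (h : HasPerfectMatchingOn G S) :
    Even S.ncard := by
  obtain ⟨M, hM, rfl⟩ := hasPerfectMatchingOn_iff.mp h
  exact hM.ncard_coveredVerts ▸ even_two_mul _

section MatchingNumberOn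

variable {A : Finset V} {M : Finset (Sym2 V)}

def IsMatchingOn (G : SimpleGraph V) (A : Finset V) (M : Finset (Sym2 V)) : Prop :=
  IsMatchingSet G M ∧ coveredVerts M ⊆ ↑A

noncomputable def matchingNumberOn (G : SimpleGraph V) (A : Finset V) : ℕ :=
  sSup {k | ∃ M, IsMatchingOn G A M ∧ M.card = k}

def IsMaxMatchingOn (G : SimpleGraph V) (A : Finset V) (M : Finset (Sym2 V)) : Prop :=
  IsMatchingOn G A M ∧ M.card = matchingNumberOn G A

lemma IsMatchingOn.two_mul_card_le (hM : IsMatchingOn G A M) : 2 * M.card ≤ A.card := by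
  rw [← hM.1.ncard_coveredVerts, ← Set.ncard_coe_finset]
  exact Set.ncard_le_ncard hM.2 A.finite_toSet

lemma bddAbove_card_isMatchingOn (G : SimpleGraph V) (A : Finset V) :
    BddAbove {k | ∃ M, IsMatchingOn G A M ∧ M.card = k} := by
  refine ⟨A.card, ?_⟩
  rintro _ ⟨M, hM, rfl⟩
  have := hM.two_mul_card_le
  omega

lemma IsMatchingOn.card_le (hM : IsMatchingOn G A M) : M.card ≤ matchingNumberOn G A :=
  le_csSup (bddAbove_card_isMatchingOn G A) ⟨M, hM, rfl⟩

lemma exists_isMaxMatchingOn (G : SimpleGraph V) (A : Finset V) :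
    ∃ M, IsMaxMatchingOn G A M := by
  have hempty : IsMatchingOn G A ∅ := ⟨⟨by simp, by simp⟩, by simp [coveredVerts]⟩
  exact Nat.sSup_mem (s := {k | ∃ M, IsMatchingOn G A M ∧ M.card = k}) ⟨0, ∅, hempty, rfl⟩
    (bddAbove_card_isMatchingOn G A)

lemma IsMaxMatchingOn.not_adj (hM : IsMaxMatchingOn G A M) {u w : V} (hu : u ∈ A)
    (hw : w ∈ A) (huM : u ∉ coveredVerts M) (hwM : w ∉ coveredVerts M) : ¬ G.Adj u w := by
  classical
  intro huw
  have hM' : IsMatchingOn G A (insert s(u, w) M) := by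
    refine ⟨hM.1.1.insert_mk huw huM hwM, ?_⟩
    rw [coveredVerts_insert]
    exact Set.insert_subset hu (Set.insert_subset hw hM.1.2)
  have := hM'.card_le
  rw [card_insert_of_notMem_coveredVerts huM, hM.2] at this
  omega

lemma matchingNumberOn_erase_add_one [DecidableEq V] {v : V}
    (hcov : ∀ M, IsMaxMatchingOn G A M → v ∈ coveredVerts M) :
    matchingNumberOn G (A.erase v) + 1 = matchingNumberOn G A := by
  obtain ⟨M', hM'⟩ := exists_isMaxMatchingOn G (A.erase v)
  have hM'A : IsMatchingOn G A M' :=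
    ⟨hM'.1.1, hM'.1.2.trans (Finset.coe_subset.mpr (Finset.erase_subset v A))⟩
  have hvM' : v ∉ coveredVerts M' := fun h => by simpa using hM'.1.2 h
  have hlt : matchingNumberOn G (A.erase v) < matchingNumberOn G A :=
    lt_of_le_of_ne (hM'.2 ▸ hM'A.card_le) fun h => hvM' (hcov M' ⟨hM'A, hM'.2.trans h⟩)
  obtain ⟨M, hM⟩ := exists_isMaxMatchingOn G A
  obtain ⟨w, hvwM, -⟩ := hM.1.1.exists_adj (hcov M hM)
  have hMerase : IsMatchingOn G (A.erase v) (M.erase s(v, w)) := by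
    refine ⟨hM.1.1.mono (Finset.erase_subset _ _), ?_⟩
    rw [hM.1.1.coveredVerts_erase hvwM, Finset.coe_erase]
    exact Set.sdiff_subset_sdiff hM.1.2 (by simp)
  have := hMerase.card_le
  have := Finset.card_erase_add_one hvwM
  have := hM.2
  omega

end MatchingNumberOn

section Components

variable {s : Set V}

def compSuppOn (G : SimpleGraph V) (s : Set V) (c : (G.induce s).ConnectedComponent) : Set V :=
  Subtype.val '' c.supp

lemma mem_compSuppOn {c : (G.induce s).ConnectedComponent} {x : V} :
    x ∈ compSuppOn G s c ↔ ∃ hx : x ∈ s, (G.induce s).connectedComponentMk ⟨x, hx⟩ = c := by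
  simp [compSuppOn, ConnectedComponent.mem_supp_iff]

lemma compSuppOn_subset (c : (G.induce s).ConnectedComponent) : compSuppOn G s c ⊆ s := by
  rintro _ ⟨⟨x, hx⟩, -, rfl⟩
  exact hx

lemma compSuppOn_nonempty (c : (G.induce s).ConnectedComponent) : (compSuppOn G s c).Nonempty :=
  c.nonempty_supp.image _

lemma mem_compSuppOn_of_adj {c : (G.induce s).ConnectedComponent} {x y : V}
    (hx : x ∈ compSuppOn G s c) (hxy : G.Adj x y) (hy : y ∈ s) : y ∈ compSuppOn G s c := by
  obtain ⟨hxs, rfl⟩ := mem_compSuppOn.mp hx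
  exact mem_compSuppOn.mpr ⟨hy, (ConnectedComponent.connectedComponentMk_eq_of_adj
    (G := G.induce s) (v := ⟨x, hxs⟩) (w := ⟨y, hy⟩) hxy).symm⟩

lemma reachable_of_mem_compSuppOn {c : (G.induce s).ConnectedComponent} {x y : V}
    (hx : x ∈ compSuppOn G s c) (hy : y ∈ compSuppOn G s c) :
    (G.induce s).Reachable ⟨x, compSuppOn_subset c hx⟩ ⟨y, compSuppOn_subset c hy⟩ := by
  obtain ⟨_, hxc⟩ := mem_compSuppOn.mp hx
  obtain ⟨_, hyc⟩ := mem_compSuppOn.mp hy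
  exact ConnectedComponent.exact (hxc.trans hyc.symm)

lemma hasPerfectMatchingOn_compSuppOn_inter {M : Finset (Sym2 V)} (hM : IsMatchingSet G M)
    (hMs : coveredVerts M ⊆ s) (c : (G.induce s).ConnectedComponent) :
    HasPerfectMatchingOn G (compSuppOn G s c ∩ coveredVerts M) := by
  classical
  refine hasPerfectMatchingOn_iff.mpr ⟨M.filter fun e => ∀ x ∈ e, x ∈ compSuppOn G s c,
    hM.mono (Finset.filter_subset _ _), ?_⟩
  ext x
  constructor
  · rintro ⟨e, he, hxe⟩
    rw [Finset.mem_filter] at he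
    exact ⟨he.2 x hxe, e, he.1, hxe⟩
  · rintro ⟨hxc, hxM⟩
    obtain ⟨w, hxwM, hxw⟩ := hM.exists_adj hxM
    have hwc : w ∈ compSuppOn G s c :=
      mem_compSuppOn_of_adj hxc hxw (hMs ⟨_, hxwM, Sym2.mem_mk_right _ _⟩)
    refine ⟨s(x, w), Finset.mem_filter.mpr ⟨hxwM, fun y hy => ?_⟩, Sym2.mem_mk_left _ _⟩
    rcases Sym2.mem_iff.mp hy with rfl | rfl
    exacts [hxc, hwc]

end Components

section Gallai

variable {A : Finset V} {M : Finset (Sym2 V)}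

def EveryVertexMissable (G : SimpleGraph V) (A : Finset V) : Prop :=
  ∀ v ∈ A, ∃ M, IsMaxMatchingOn G A M ∧ v ∉ coveredVerts M

/-- Gallai's lemma. The vertex `b` after `u` on a walk to `v` is covered by `M`. Exchanging `M`
against a maximum matching missing `b` exposes `b` and covers one new vertex instead: if that
vertex is not `u`, the edge `u b` has both ends exposed; if it is, continue along the walk. -/
theorem EveryVertexMissable.eq_of_reachable (hA : EveryVertexMissable G A)
    (hM : IsMaxMatchingOn G A M) {u v : (↑A : Set V)} (huv : (G.induce ↑A).Reachable u v)
    (hu : ↑u ∉ coveredVerts M) (hv : ↑v ∉ coveredVerts M) : u = v := by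
  obtain ⟨p⟩ := huv
  induction p generalizing M with
  | nil => rfl
  | @cons u b v hub q ih =>
    have hbM : ↑b ∈ coveredVerts M := by_contra fun hbM => hM.not_adj u.2 b.2 hu hbM hub
    obtain ⟨N, hN, hbN⟩ := hA b b.2
    rcases hM.1.1.alternatingExchange hN.1.1 hbM hbN with
      ⟨N', hN', hN'cov, hN'card⟩ | ⟨M', x, hM', hM'card, hx, hM'cov⟩
    · have := (show IsMatchingOn G A N' from
        ⟨hN', hN'cov.trans (Set.union_subset hM.1.2 hN.1.2)⟩).card_le
      have := hN.2
      omega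
    have hM'max : IsMaxMatchingOn G A M' :=
      ⟨⟨hM', hM'cov ▸ Set.insert_subset (hN.1.2 hx.1) (Set.sdiff_subset.trans hM.1.2)⟩,
        hM'card.trans hM.2⟩
    have hbM' : ↑b ∉ coveredVerts M' := by
      rw [hM'cov]
      rintro (h | ⟨-, h⟩)
      exacts [hx.2 (h ▸ hbM), h rfl]
    by_cases hxu : x = ↑u
    · by_contra hne
      have hvM' : ↑v ∉ coveredVerts M' := by
        rw [hM'cov]
        rintro (h | ⟨h, -⟩)
        exacts [hne (Subtype.ext (h.trans hxu)).symm, hv h]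
      exact hv (ih hM'max hbM' hvM' ▸ hbM)
    · have huM' : ↑u ∉ coveredVerts M' := by
        rw [hM'cov]
        rintro (h | ⟨h, -⟩)
        exacts [hxu h.symm, hu h]
      exact absurd hub (hM'max.not_adj u.2 b.2 huM' hbM')

lemma EveryVertexMissable.hasPerfectMatchingOn_compSuppOn_diff (hA : EveryVertexMissable G A)
    (c : (G.induce ↑A).ConnectedComponent) {v : V} (hv : v ∈ compSuppOn G ↑A c) :
    HasPerfectMatchingOn G (compSuppOn G ↑A c \ {v}) := by
  obtain ⟨N, hN, hvN⟩ := hA v (compSuppOn_subset c hv)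
  convert hasPerfectMatchingOn_compSuppOn_inter hN.1.1 hN.1.2 c using 1
  ext x
  refine ⟨fun ⟨hxc, hxv⟩ => ⟨hxc, by_contra fun hxN => hxv ?_⟩,
    fun ⟨hxc, hxN⟩ => ⟨hxc, fun hxv => hvN (hxv ▸ hxN)⟩⟩
  exact congrArg Subtype.val (hA.eq_of_reachable hN (reachable_of_mem_compSuppOn hxc hv) hxN hvN)

lemma EveryVertexMissable.odd_ncard_compSuppOn (hA : EveryVertexMissable G A)
    (c : (G.induce ↑A).ConnectedComponent) : Odd (compSuppOn G ↑A c).ncard := by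
  obtain ⟨v, hv⟩ := compSuppOn_nonempty c
  rw [← Set.ncard_sdiff_singleton_add_one hv (A.finite_toSet.subset (compSuppOn_subset c))]
  exact (hA.hasPerfectMatchingOn_compSuppOn_diff c hv).even_ncard.add_one

lemma EveryVertexMissable.exists_mem_compSuppOn_notMem_coveredVerts
    (hA : EveryVertexMissable G A) (hM : IsMatchingOn G A M)
    (c : (G.induce ↑A).ConnectedComponent) : ∃ x ∈ compSuppOn G ↑A c, x ∉ coveredVerts M := by
  by_contra! h
  have := hasPerfectMatchingOn_compSuppOn_inter hM.1 hM.2 c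
  rw [Set.inter_eq_left.mpr h] at this
  exact Nat.not_even_iff_odd.mpr (hA.odd_ncard_compSuppOn c) this.even_ncard

/-- A maximum matching leaves exactly one vertex of each component uncovered. -/
lemma EveryVertexMissable.two_mul_matchingNumberOn_add_card (hA : EveryVertexMissable G A) :
    2 * matchingNumberOn G A + Nat.card (G.induce ↑A).ConnectedComponent = A.card := by
  obtain ⟨M, hM⟩ := exists_isMaxMatchingOn G A
  let toComp (x : ↥((↑A : Set V) \ coveredVerts M)) : (G.induce ↑A).ConnectedComponent :=
    (G.induce ↑A).connectedComponentMk ⟨x, x.2.1⟩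
  have hbij : Function.Bijective toComp := by
    refine ⟨fun x y hxy => ?_, fun c => ?_⟩
    · have := hA.eq_of_reachable hM (ConnectedComponent.exact hxy) x.2.2 y.2.2
      exact Subtype.ext (Subtype.mk.inj this)
    · obtain ⟨x, hxc, hxM⟩ := hA.exists_mem_compSuppOn_notMem_coveredVerts hM.1 c
      obtain ⟨hxA, rfl⟩ := mem_compSuppOn.mp hxc
      exact ⟨⟨x, hxA, hxM⟩, rfl⟩
  have hcard := Set.ncard_sdiff_add_ncard_of_subset hM.1.2
  rw [hM.1.1.ncard_coveredVerts, hM.2, Set.ncard_coe_finset] at hcard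
  rw [← Nat.card_eq_of_bijective toComp hbij, Nat.card_coe_set_eq]
  omega

end Gallai

section Decomposition

variable {A : Finset V}

noncomputable def numOddComponents (G : SimpleGraph V) (s : Set V) : ℕ :=
  {c : (G.induce s).ConnectedComponent | Odd (compSuppOn G s c).ncard}.ncard

def HasCriticalComponents (G : SimpleGraph V) (s : Set V) : Prop :=
  (∀ c : (G.induce s).ConnectedComponent, Odd (compSuppOn G s c).ncard →
      ∀ v ∈ compSuppOn G s c, HasPerfectMatchingOn G (compSuppOn G s c \ {v})) ∧
    ∀ c : (G.induce s).ConnectedComponent, ¬ Odd (compSuppOn G s c).ncard →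
      HasPerfectMatchingOn G (compSuppOn G s c)

def IsGallaiEdmondsSet (G : SimpleGraph V) (A T : Finset V) : Prop :=
  T ⊆ A ∧ T.card ≤ matchingNumberOn G A ∧
    2 * matchingNumberOn G A + numOddComponents G (↑A \ ↑T) = A.card + T.card ∧
    HasCriticalComponents G (↑A \ ↑T)

lemma EveryVertexMissable.isGallaiEdmondsSet_empty (hA : EveryVertexMissable G A) :
    IsGallaiEdmondsSet G A ∅ := by
  refine ⟨Finset.empty_subset A, Nat.zero_le _, ?_, ?_⟩ <;> rw [Finset.coe_empty, Set.sdiff_empty]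
  · have hodd : {c : (G.induce ↑A).ConnectedComponent | Odd (compSuppOn G ↑A c).ncard} =
        Set.univ := Set.eq_univ_of_forall hA.odd_ncard_compSuppOn
    rw [numOddComponents, hodd, Set.ncard_univ, Finset.card_empty, add_zero]
    exact hA.two_mul_matchingNumberOn_add_card
  · exact ⟨fun c _ v hv => hA.hasPerfectMatchingOn_compSuppOn_diff c hv,
      fun c hc => absurd (hA.odd_ncard_compSuppOn c) hc⟩

lemma IsGallaiEdmondsSet.of_erase [DecidableEq V] {v : V} {T : Finset V} (hv : v ∈ A)
    (hcov : ∀ M, IsMaxMatchingOn G A M → v ∈ coveredVerts M)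
    (hT : IsGallaiEdmondsSet G (A.erase v) T) : IsGallaiEdmondsSet G A (insert v T) := by
  obtain ⟨hTA, hTcard, hcount, hcrit⟩ := hT
  have hvT : v ∉ T := fun h => by simpa using hTA h
  have hset : (↑A : Set V) \ ↑(insert v T) = ↑(A.erase v) \ ↑T := by
    ext x
    simp only [Finset.coe_insert, Finset.coe_erase, Set.mem_sdiff, Set.mem_insert_iff,
      Finset.mem_coe, Set.mem_singleton_iff]
    tauto
  have hnu := matchingNumberOn_erase_add_one hcov
  have hAcard := Finset.card_erase_add_one hv
  refine ⟨Finset.insert_subset hv (hTA.trans (A.erase_subset v)), ?_, ?_, hset ▸ hcrit⟩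
  · rw [Finset.card_insert_of_notMem hvT]
    omega
  · rw [hset, Finset.card_insert_of_notMem hvT]
    omega

theorem exists_isGallaiEdmondsSet (G : SimpleGraph V) (A : Finset V) :
    ∃ T, IsGallaiEdmondsSet G A T := by
  classical
  induction A using Finset.strongInduction with
  | H A ih =>
  by_cases hA : EveryVertexMissable G A
  · exact ⟨∅, hA.isGallaiEdmondsSet_empty⟩
  · simp only [EveryVertexMissable, not_forall, not_exists, not_and, not_not] at hA
    obtain ⟨v, hv, hcov⟩ := hA
    obtain ⟨T, hT⟩ := ih _ (Finset.erase_ssubset hv)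
    exact ⟨_, hT.of_erase hv hcov⟩

end Decomposition

end

/-- Tutte–Berge formula with the Gallai–Edmonds refinement: there is `T ⊆ V(G)` with
`|T| ≤ β(G)` and `β(G) = (n - o(G-T) + |T|)/2`; each odd component of `G - T` is
factor-critical and each even component has a perfect matching. -/
theorem stmt4 {V : Type*} [Fintype V] (G : SimpleGraph V) :
    ∃ T : Finset V, T.card ≤ matchingNumber G ∧
      2 * matchingNumber G + oddComponents G T = Fintype.card V + T.card ∧
      (∀ c : (G.induce ((↑T : Set V)ᶜ)).ConnectedComponent,
        Odd (compSupp G T c).ncard →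
          ∀ v ∈ compSupp G T c, HasPerfectMatchingOn G (compSupp G T c \ {v})) ∧
      (∀ c : (G.induce ((↑T : Set V)ᶜ)).ConnectedComponent,
        ¬ Odd (compSupp G T c).ncard → HasPerfectMatchingOn G (compSupp G T c)) := by
  obtain ⟨T, -, hTcard, hcount, hcrit⟩ := exists_isGallaiEdmondsSet G Finset.univ
  have hnu : matchingNumber G = matchingNumberOn G Finset.univ := by
    simp [matchingNumber, matchingNumberOn, IsMatchingOn]
  have hset : (↑(Finset.univ : Finset V) : Set V) \ ↑T = (↑T)ᶜ := by
    rw [Finset.coe_univ, Set.compl_eq_univ_sdiff]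
  rw [hset, Finset.card_univ] at hcount
  rw [hset] at hcrit
  exact ⟨T, hnu ▸ hTcard, hnu ▸ hcount, hcrit⟩
end

section
/- Let G be an edge-colored graph with no rainbow matching of size k, and let x, y ∈ V(G). Suppose H is a rainbow spanning subgraph of G (one edge of each color present) and H - {x, y} contains two edge-disjoint matchings, each of size k - 1. Then xy is not an edge of G. -/
open SimpleGraph

/-- If `G` has no rainbow matching of size `k`, `H` is a rainbow spanning subgraph of `G`,
and `H - {x, y}` contains two edge-disjoint matchings of size `k - 1`, then `xy ∉ E(G)`. -/
theorem stmt7 {V : Type*} [DecidableEq V] (G H : SimpleGraph V) (c : Sym2 V → ℕ) (k : ℕ)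
    (hnr : ¬ ∃ M, IsRainbowMatching G c k M)
    (hHG : H ≤ G) (hinj : Set.InjOn c H.edgeSet)
    (hcover : c '' H.edgeSet = c '' G.edgeSet)
    (x y : V)
    (hM : ∃ M₁ M₂ : Finset (Sym2 V), IsMatchingSet H M₁ ∧ IsMatchingSet H M₂ ∧
      Disjoint M₁ M₂ ∧ M₁.card = k - 1 ∧ M₂.card = k - 1 ∧
      ∀ e ∈ M₁ ∪ M₂, ∀ v : V, v ∈ e → v ≠ x ∧ v ≠ y) :
    ¬ G.Adj x y := by
  intro hadj
  rcases hM with ⟨M₁, M₂, hM₁, hM₂, hdisj, hc₁, hc₂, havoid⟩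
  rcases Nat.eq_zero_or_pos k with hk | hk
  · exact hnr ⟨∅, ⟨by simp, by simp⟩, by simp [hk], by simp⟩
  have hxyG : s(x, y) ∈ G.edgeSet := hadj
  have hmem : c s(x, y) ∈ c '' G.edgeSet := ⟨_, hxyG, rfl⟩
  rw [← hcover] at hmem
  obtain ⟨e, heH, hce⟩ := hmem
  have key : ∀ M : Finset (Sym2 V), IsMatchingSet H M → M.card = k - 1 →
      (∀ f ∈ M, ∀ v : V, v ∈ f → v ≠ x ∧ v ≠ y) → e ∉ M → False := by
    intro M hMm hMcard hav heM
    have hxyM : s(x, y) ∉ M := fun h => (hav _ h x (by simp)).1 rfl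
    apply hnr
    refine ⟨insert s(x, y) M, ⟨?_, ?_⟩, ?_, ?_⟩
    · intro f hf
      rcases Finset.mem_insert.mp hf with rfl | hf
      · exact hxyG
      · exact (edgeSet_subset_edgeSet.mpr hHG) (hMm.1 f hf)
    · intro f hf g hg hfg v hvf
      rcases Finset.mem_insert.mp hf with rfl | hf <;>
        rcases Finset.mem_insert.mp hg with rfl | hg
      · exact absurd rfl hfg
      · intro hvg
        have h12 := hav _ hg v hvg
        rcases Sym2.mem_iff.mp hvf with rfl | rfl
        · exact h12.1 rfl
        · exact h12.2 rfl
      · intro hvg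
        have h12 := hav _ hf v hvf
        rcases Sym2.mem_iff.mp hvg with rfl | rfl
        · exact h12.1 rfl
        · exact h12.2 rfl
      · exact hMm.2 f hf g hg hfg v hvf
    · rw [Finset.card_insert_of_notMem hxyM, hMcard]; omega
    · intro a ha b hb hab
      simp only [Finset.coe_insert, Set.mem_insert_iff, Finset.mem_coe] at ha hb
      rcases ha with rfl | ha <;> rcases hb with rfl | hb
      · rfl
      · have h := hinj heH (hMm.1 b hb) (hce.trans hab)
        exact absurd hb (h ▸ heM)
      · have h := hinj (hMm.1 a ha) heH (hab.trans hce.symm)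
        exact absurd ha (h.symm ▸ heM)
      · exact hinj (hMm.1 a ha) (hMm.1 b hb) hab
  by_cases h1 : e ∈ M₁
  · exact key M₂ hM₂ hc₂ (fun f hf => havoid f (Finset.mem_union_right _ hf))
      (Finset.disjoint_left.mp hdisj h1)
  · exact key M₁ hM₁ hc₁ (fun f hf => havoid f (Finset.mem_union_left _ hf)) h1
end

section
/- Let G be an edge-colored graph with no rainbow matching of size 5, let H be a rainbow spanning subgraph of G, let xy ∈ E(G) and uv ∈ E(H) with {x,y} ∩ {u,v} = ∅. If H - {x, y, u, v} contains two edge-disjoint matchings of size 3, then the color of xy equals the color of uv. -/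
open SimpleGraph

/-- If `G` has no rainbow matching of size 5, `H` is a rainbow spanning subgraph of `G`,
`xy ∈ E(G)`, `uv ∈ E(H)` with `{x,y} ∩ {u,v} = ∅`, and `H - {x,y,u,v}` contains two
edge-disjoint matchings of size 3, then `c(xy) = c(uv)`. -/
theorem stmt8 {V : Type*} [DecidableEq V] (G H : SimpleGraph V) (c : Sym2 V → ℕ)
    (hnr : ¬ ∃ M, IsRainbowMatching G c 5 M)
    (hHG : H ≤ G) (hinj : Set.InjOn c H.edgeSet)
    (hcover : c '' H.edgeSet = c '' G.edgeSet)
    (x y u v : V) (hxy : G.Adj x y) (huv : H.Adj u v)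
    (hxu : x ≠ u) (hxv : x ≠ v) (hyu : y ≠ u) (hyv : y ≠ v)
    (hM : ∃ M₁ M₂ : Finset (Sym2 V), IsMatchingSet H M₁ ∧ IsMatchingSet H M₂ ∧
      Disjoint M₁ M₂ ∧ M₁.card = 3 ∧ M₂.card = 3 ∧
      ∀ e ∈ M₁ ∪ M₂, ∀ w : V, w ∈ e → w ≠ x ∧ w ≠ y ∧ w ≠ u ∧ w ≠ v) :
    c s(x, y) = c s(u, v) := by
  by_contra hne
  obtain ⟨M₁, M₂, hm1, hm2, hdisj, hc1, hc2, havoid⟩ := hM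
  apply hnr
  have key : (∀ e ∈ M₁, c e ≠ c s(x,y)) ∨ (∀ e ∈ M₂, c e ≠ c s(x,y)) := by
    by_contra h
    push_neg at h
    obtain ⟨⟨e₁, he₁, hce₁⟩, ⟨e₂, he₂, hce₂⟩⟩ := h
    have he : e₁ = e₂ := hinj (hm1.1 _ he₁) (hm2.1 _ he₂) (hce₁.trans hce₂.symm)
    exact (Finset.disjoint_left.mp hdisj he₁) (he ▸ he₂)
  obtain ⟨M, hm, hcard, hpick, hav⟩ :
      ∃ M, IsMatchingSet H M ∧ M.card = 3 ∧ (∀ e ∈ M, c e ≠ c s(x,y)) ∧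
        (∀ e ∈ M, ∀ w : V, w ∈ e → w ≠ x ∧ w ≠ y ∧ w ≠ u ∧ w ≠ v) := by
    rcases key with h | h
    · exact ⟨M₁, hm1, hc1, h, fun e he => havoid e (Finset.mem_union_left _ he)⟩
    · exact ⟨M₂, hm2, hc2, h, fun e he => havoid e (Finset.mem_union_right _ he)⟩
  have hxyM : s(x,y) ∉ M := fun h => (hav _ h x (by simp)).1 rfl
  have huvM : s(u,v) ∉ M := fun h => (hav _ h u (by simp)).2.2.1 rfl
  have hne_e : (s(x,y) : Sym2 V) ≠ s(u,v) := by
    intro h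
    have hu : u ∈ (s(x,y) : Sym2 V) := h ▸ (by simp)
    rw [Sym2.mem_iff] at hu
    rcases hu with h' | h'
    · exact hxu h'.symm
    · exact hyu h'.symm
  refine ⟨insert s(x,y) (insert s(u,v) M), ⟨?_, ?_⟩, ?_, ?_⟩
  · intro e he
    rcases Finset.mem_insert.mp he with rfl | he
    · exact hxy
    rcases Finset.mem_insert.mp he with rfl | he
    · exact SimpleGraph.edgeSet_subset_edgeSet.mpr hHG huv
    · exact SimpleGraph.edgeSet_subset_edgeSet.mpr hHG (hm.1 _ he)
  · intro e he f hf hef w hwe hwf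
    simp only [Finset.mem_insert] at he hf
    rcases he with rfl | rfl | he <;> rcases hf with rfl | rfl | hf
    · exact hef rfl
    · rcases Sym2.mem_iff.mp hwe with rfl | rfl <;>
        rcases Sym2.mem_iff.mp hwf with h | h <;> simp_all
    · have := hav _ hf w hwf
      rcases Sym2.mem_iff.mp hwe with rfl | rfl
      · exact this.1 rfl
      · exact this.2.1 rfl
    · rcases Sym2.mem_iff.mp hwe with rfl | rfl <;>
        rcases Sym2.mem_iff.mp hwf with h | h <;> simp_all
    · exact hef rfl
    · have := hav _ hf w hwf
      rcases Sym2.mem_iff.mp hwe with rfl | rfl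
      · exact this.2.2.1 rfl
      · exact this.2.2.2 rfl
    · have := hav _ he w hwe
      rcases Sym2.mem_iff.mp hwf with rfl | rfl
      · exact this.1 rfl
      · exact this.2.1 rfl
    · have := hav _ he w hwe
      rcases Sym2.mem_iff.mp hwf with rfl | rfl
      · exact this.2.2.1 rfl
      · exact this.2.2.2 rfl
    · exact hm.2 e he f hf hef w hwe hwf
  · rw [Finset.card_insert_of_notMem (by simp [hne_e, hxyM]),
      Finset.card_insert_of_notMem huvM, hcard]
  · intro a ha b hb hab
    simp only [Finset.coe_insert, Set.mem_insert_iff, Finset.mem_coe] at ha hb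
    have huvH : s(u,v) ∈ H.edgeSet := huv
    rcases ha with rfl | rfl | ha <;> rcases hb with rfl | rfl | hb
    · rfl
    · exact absurd hab hne
    · exact absurd hab.symm (hpick b hb)
    · exact absurd hab.symm hne
    · rfl
    · exact hinj huvH (hm.1 _ hb) hab
    · exact absurd hab (hpick a ha)
    · exact hinj (hm.1 _ ha) huvH hab
    · exact hinj (hm.1 _ ha) (hm.1 _ hb) hab
end

section
/- For all k ≥ 5 and n ≥ 2k, ar(𝒪_n, M_k) ≥ n + 2k - 6; that is, there exists a maximal outerplanar graph G on n vertices and a surjective edge-coloring of G using n + 2k - 6 colors with no rainbow matching of size k. -/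
open SimpleGraph

/-!
The witness is the fan: the path `1, …, n - 1` together with an apex `0` joined to every vertex.
A connected branch set avoiding the apex is an interval of the path, and an edge avoiding the apex
joins consecutive vertices, so it cannot jump over a vertex of a third branch set. All branch sets
but at most one avoid the apex, and intervals on a line cannot realize a triangle, a claw or a
4-cycle, which is what remains of `K₄` and `K_{2,3}` after deleting a vertex. A chord `uv` creates
a `K₄` minor with branch sets `{0}`, `{u}`, `{v}` and the vertices strictly between `u` and `v`.

With `t = 2k - 5`, the apex edges get `n - 1` distinct colours, the `t - 1` path edges inside
`{1, …, t}` further distinct colours, and all other path edges one common colour. A rainbow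
matching has at most one apex edge, at most one edge of the common colour and at most `t / 2`
edges inside `{1, …, t}`, hence at most `k - 1` edges.
-/

section MinorModel

variable {V W : Type*} {G : SimpleGraph V} {H : SimpleGraph W} {f : W → Set V}

structure IsMinorModel (G : SimpleGraph V) (H : SimpleGraph W) (f : W → Set V) : Prop where
  nonempty : ∀ w, (f w).Nonempty
  connected : ∀ w, (G.induce (f w)).Connected
  pairwise_disjoint : Pairwise fun w₁ w₂ => Disjoint (f w₁) (f w₂)
  exists_adj : ∀ ⦃w₁ w₂⦄, H.Adj w₁ w₂ → ∃ v₁ ∈ f w₁, ∃ v₂ ∈ f w₂, G.Adj v₁ v₂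

lemma hasMinor_iff : HasMinor G H ↔ ∃ f, IsMinorModel G H f :=
  ⟨fun ⟨f, h₁, h₂, h₃, h₄⟩ => ⟨f, h₁, h₂, h₃, h₄⟩, fun ⟨f, h₁, h₂, h₃, h₄⟩ => ⟨f, h₁, h₂, h₃, h₄⟩⟩

lemma IsMinorModel.exists_forall_ne_notMem [Nonempty W] (hf : IsMinorModel G H f) (v : V) :
    ∃ w₀, ∀ w ≠ w₀, v ∉ f w := by
  by_cases h : ∃ w₀, v ∈ f w₀
  · obtain ⟨w₀, h₀⟩ := h
    exact ⟨w₀, fun w hw hv => Set.disjoint_left.1 (hf.pairwise_disjoint hw) hv h₀⟩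
  · push Not at h
    exact ⟨Classical.arbitrary W, fun w _ => h w⟩

end MinorModel

lemma Set.OrdConnected.lt_iff_lt_of_notMem {α : Type*} [LinearOrder α] {s : Set α}
    (hs : s.OrdConnected) {a x b : α} (ha : a ∈ s) (hx : x ∈ s) (hb : b ∉ s) : a < b ↔ x < b := by
  have key {a x : α} (ha : a ∈ s) (hx : x ∈ s) (hab : a < b) : x < b :=
    lt_of_not_ge fun hbx => hb (hs.out ha hx ⟨hab.le, hbx⟩)
  exact ⟨key ha hx, key hx ha⟩

lemma pathGraph_induce_connected {n : ℕ} {s : Set (Fin n)} (hs : s.OrdConnected)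
    (hne : s.Nonempty) : ((pathGraph n).induce s).Connected := by
  have : Nonempty s := hne.to_subtype
  have key (d : ℕ) :
      ∀ x y : s, y.1.val = x.1.val + d → ((pathGraph n).induce s).Reachable x y := by
    induction d with
    | zero =>
      intro x y h
      rw [Subtype.ext (Fin.ext h)]
    | succ d ih =>
      intro x y h
      have hx' : (⟨x.1.val + 1, by omega⟩ : Fin n) ∈ s :=
        hs.out x.2 y.2 ⟨Fin.le_def.2 (by simp), Fin.le_def.2 (by simp only; omega)⟩
      have hadj : ((pathGraph n).induce s).Adj x ⟨_, hx'⟩ := by simp [pathGraph_adj]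
      exact hadj.reachable.trans (ih _ _ (by simp only; omega))
  refine ⟨fun x y => ?_⟩
  rcases le_total x.1.val y.1.val with h | h
  · exact key (y.1.val - x.1.val) x y (by omega)
  · exact (key (x.1.val - y.1.val) y x (by omega)).symm

section Fan

variable {n : ℕ} [NeZero n]

def fan (n : ℕ) [NeZero n] : SimpleGraph (Fin n) :=
  pathGraph n ⊔ fromRel fun u _ => u = 0

lemma fan_adj {u v : Fin n} :
    (fan n).Adj u v ↔
      u.val ≠ v.val ∧ (u.val = 0 ∨ v.val = 0 ∨ u.val + 1 = v.val ∨ v.val + 1 = u.val) := by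
  simp only [fan, sup_adj, pathGraph_adj, fromRel_adj, ne_eq, Fin.ext_iff, Fin.val_zero]
  omega

lemma fan_adj_of_ne_zero {u v : Fin n} (h : (fan n).Adj u v) (hu : u ≠ 0) (hv : v ≠ 0) :
    u.val + 1 = v.val ∨ v.val + 1 = u.val := by
  have := Fin.val_ne_zero_iff.2 hu
  have := Fin.val_ne_zero_iff.2 hv
  rw [fan_adj] at h
  omega

lemma pathGraph_le_fan : pathGraph n ≤ fan n := le_sup_left

lemma ordConnected_of_connected_induce_fan {s : Set (Fin n)} (hs : 0 ∉ s)
    (h : ((fan n).induce s).Connected) : s.OrdConnected := by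
  refine ⟨fun a ha b hb c hc => ?_⟩
  obtain ⟨p⟩ := h.preconnected ⟨a, ha⟩ ⟨b, hb⟩
  suffices ∀ {x y : s}, ((fan n).induce s).Walk x y → x.1 ≤ c → c ≤ y.1 → c ∈ s from
    this p hc.1 hc.2
  intro x y p
  induction p with
  | nil => exact fun h₁ h₂ => le_antisymm h₁ h₂ ▸ Subtype.mem _
  | @cons x z y hxz p ih =>
    intro h₁ h₂
    rcases h₁.eq_or_lt with h₁ | h₁
    · exact h₁ ▸ x.2
    have := fan_adj_of_ne_zero (u := x.1) (v := z.1) hxz (ne_of_mem_of_not_mem x.2 hs)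
      (ne_of_mem_of_not_mem z.2 hs)
    exact ih (by omega) h₂

/-- An edge avoiding the apex joins consecutive vertices, so a vertex `b` outside the two
intervals `f w₁` and `f w₂` lies on the same side of both. -/
lemma IsMinorModel.lt_and_lt_or_lt_and_lt {W : Type*} {H : SimpleGraph W} {f : W → Set (Fin n)}
    (hf : IsMinorModel (fan n) H f) {w₁ w₂ w : W} (h : H.Adj w₁ w₂) (hw₁ : w ≠ w₁)
    (hw₂ : w ≠ w₂) (h₁ : 0 ∉ f w₁) (h₂ : 0 ∉ f w₂) {a b c : Fin n} (ha : a ∈ f w₁)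
    (hb : b ∈ f w) (hc : c ∈ f w₂) : b < a ∧ b < c ∨ a < b ∧ c < b := by
  obtain ⟨x, hx, y, hy, hxy⟩ := hf.exists_adj h
  have hb₁ : b ∉ f w₁ := Set.disjoint_left.1 (hf.pairwise_disjoint hw₁) hb
  have hb₂ : b ∉ f w₂ := Set.disjoint_left.1 (hf.pairwise_disjoint hw₂) hb
  have hA := ordConnected_of_connected_induce_fan h₁ (hf.connected w₁)
  have hC := ordConnected_of_connected_induce_fan h₂ (hf.connected w₂)
  have hax := hA.lt_iff_lt_of_notMem ha hx hb₁
  have hcy := hC.lt_iff_lt_of_notMem hc hy hb₂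
  have hxy := fan_adj_of_ne_zero hxy (ne_of_mem_of_not_mem hx h₁) (ne_of_mem_of_not_mem hy h₂)
  have := ne_of_mem_of_not_mem ha hb₁
  have := ne_of_mem_of_not_mem hc hb₂
  have := ne_of_mem_of_not_mem hx hb₁
  have := ne_of_mem_of_not_mem hy hb₂
  omega

theorem fan_not_hasMinor_K4 : ¬ HasMinor (fan n) (completeGraph (Fin 4)) := by
  rw [hasMinor_iff]
  rintro ⟨f, hf⟩
  choose r hr using hf.nonempty
  obtain ⟨w₀, hw₀⟩ := hf.exists_forall_ne_notMem 0
  have key {i j k : Fin 4} (hij : i ≠ j := by omega) (hki : k ≠ i := by omega)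
      (hkj : k ≠ j := by omega) (hi : i ≠ w₀ := by omega) (hj : j ≠ w₀ := by omega) :=
    hf.lt_and_lt_or_lt_and_lt hij hki hkj (hw₀ i hi) (hw₀ j hj) (hr i) (hr k) (hr j)
  have := key (i := w₀ + 1) (j := w₀ + 2) (k := w₀ + 3)
  have := key (i := w₀ + 1) (j := w₀ + 3) (k := w₀ + 2)
  have := key (i := w₀ + 2) (j := w₀ + 3) (k := w₀ + 1)
  omega

theorem fan_not_hasMinor_K23 :
    ¬ HasMinor (fan n) (completeBipartiteGraph (Fin 2) (Fin 3)) := by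
  rw [hasMinor_iff]
  rintro ⟨f, hf⟩
  choose r hr using hf.nonempty
  obtain ⟨w₀, hw₀⟩ := hf.exists_forall_ne_notMem 0
  have key {i : Fin 2} {j : Fin 3} (w : Fin 2 ⊕ Fin 3)
      (hi : .inl i ≠ w₀ := by simp) (hj : .inr j ≠ w₀ := by simp)
      (hwi : w ≠ .inl i := by simp) (hwj : w ≠ .inr j := by simp) :=
    hf.lt_and_lt_or_lt_and_lt (by simp) hwi hwj (hw₀ _ hi) (hw₀ _ hj) (hr _) (hr w) (hr _)
  rcases w₀ with i | j
  · -- the other vertex of the first side would have three neighbouring intervals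
    have := key (i := i + 1) (j := 0) (.inr 1)
    have := key (i := i + 1) (j := 0) (.inr 2)
    have := key (i := i + 1) (j := 1) (.inr 0)
    have := key (i := i + 1) (j := 1) (.inr 2)
    have := key (i := i + 1) (j := 2) (.inr 0)
    have := key (i := i + 1) (j := 2) (.inr 1)
    omega
  · -- the remaining four branch sets would form a cycle of intervals
    have := key (i := 0) (j := j + 1) (.inl 1)
    have := key (i := 0) (j := j + 1) (.inr (j + 2))
    have := key (i := 0) (j := j + 2) (.inl 1)
    have := key (i := 0) (j := j + 2) (.inr (j + 1))
    have := key (i := 1) (j := j + 1) (.inl 0)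
    have := key (i := 1) (j := j + 1) (.inr (j + 2))
    have := key (i := 1) (j := j + 2) (.inl 0)
    have := key (i := 1) (j := j + 2) (.inr (j + 1))
    omega

lemma fan_sup_edge_hasMinor_K4 {u v : Fin n} (hu : u.val ≠ 0) (huv : u.val + 2 ≤ v.val) :
    HasMinor (fan n ⊔ fromEdgeSet {s(u, v)}) (completeGraph (Fin 4)) := by
  have hle : fan n ≤ fan n ⊔ fromEdgeSet {s(u, v)} := le_sup_left
  have hv : v.val ≠ 0 := by omega
  have hne : u ≠ v := Fin.ne_of_val_ne (by omega)
  let w : Fin n := ⟨u.val + 1, by omega⟩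
  let w' : Fin n := ⟨v.val - 1, by omega⟩
  have hw : w ∈ Set.Ioo u v := ⟨Fin.lt_def.2 (show u.val < u.val + 1 by omega),
    Fin.lt_def.2 (show u.val + 1 < v.val by omega)⟩
  have hw' : w' ∈ Set.Ioo u v := ⟨Fin.lt_def.2 (show u.val < v.val - 1 by omega),
    Fin.lt_def.2 (show v.val - 1 < v.val by omega)⟩
  have h0 {x : Fin n} (hx : x.val ≠ 0) : (fan n).Adj 0 x := fan_adj.2 (by simp [hx.symm])
  refine ⟨![{0}, {u}, {v}, Set.Ioo u v], ?_, ?_, ?_, ?_⟩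
  · intro i
    fin_cases i
    exacts [⟨0, rfl⟩, ⟨u, rfl⟩, ⟨v, rfl⟩, ⟨w, hw⟩]
  · intro i
    fin_cases i
    iterate 3 simp [connected_top]
    exact (pathGraph_induce_connected Set.ordConnected_Ioo ⟨w, hw⟩).mono
      fun _ _ h => hle (pathGraph_le_fan h)
  · intro i j hij
    wlog hlt : i < j generalizing i j
    · exact (this hij.symm (lt_of_le_of_ne (not_lt.1 hlt) hij.symm)).symm
    fin_cases i <;> fin_cases j <;> simp at hlt
    all_goals simp [← Fin.val_ne_iff, hne, hu.symm, hv.symm]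
  · intro i j hij
    wlog hlt : i < j generalizing i j
    · obtain ⟨a, ha, b, hb, h⟩ := this hij.symm (lt_of_le_of_ne (not_lt.1 hlt) hij.symm)
      exact ⟨b, hb, a, ha, h.symm⟩
    fin_cases i <;> fin_cases j <;> simp at hlt
    exacts [⟨0, rfl, u, rfl, hle (h0 hu)⟩, ⟨0, rfl, v, rfl, hle (h0 hv)⟩,
      ⟨0, rfl, w, hw, hle (h0 (show u.val + 1 ≠ 0 by omega))⟩,
      ⟨u, rfl, v, rfl, Or.inr ⟨rfl, hne⟩⟩,
      ⟨u, rfl, w, hw, hle (pathGraph_le_fan (pathGraph_adj.2 (Or.inl rfl)))⟩,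
      ⟨v, rfl, w', hw',
        hle (pathGraph_le_fan (pathGraph_adj.2 (Or.inr (by simp [w']; omega))))⟩]

theorem maximalOuterplanar_fan : MaximalOuterplanar (fan n) := by
  refine ⟨⟨fan_not_hasMinor_K4, fan_not_hasMinor_K23⟩, fun u v hne hadj hout => ?_⟩
  rw [fan_adj] at hadj
  push Not at hadj
  obtain ⟨hu, hv, h₁, h₂⟩ := hadj (by omega)
  rcases lt_or_gt_of_ne hne with h | h
  · exact hout.1 (fan_sup_edge_hasMinor_K4 hu (by omega))
  · rw [Sym2.eq_swap] at hout
    exact hout.1 (fan_sup_edge_hasMinor_K4 hv (by omega))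

end Fan

section Matching

variable {V : Type*} {G : SimpleGraph V} {M : Finset (Sym2 V)}

lemma IsMatchingSet.card_filter_mem_le_one [DecidableEq V] (hM : IsMatchingSet G M) (v : V) :
    (M.filter (v ∈ ·)).card ≤ 1 := by
  refine Finset.card_le_one.2 fun e he f hf => ?_
  rw [Finset.mem_filter] at he hf
  by_contra hne
  exact hM.2 e he.1 f hf.1 hne v he.2 hf.2

lemma IsMatchingSet.two_mul_card_filter_subset_le [DecidableEq V] (hM : IsMatchingSet G M)
    (S : Finset V) : 2 * (M.filter (·.toFinset ⊆ S)).card ≤ S.card := by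
  set M' := M.filter (·.toFinset ⊆ S)
  have hdisj : (M' : Set (Sym2 V)).PairwiseDisjoint Sym2.toFinset := by
    intro e he f hf hne
    rw [Finset.coe_filter, Set.mem_ofPred_eq] at he hf
    exact Finset.disjoint_left.2 fun v hve hvf =>
      hM.2 e he.1 f hf.1 hne v (Sym2.mem_toFinset.1 hve) (Sym2.mem_toFinset.1 hvf)
  calc 2 * M'.card = ∑ e ∈ M', e.toFinset.card := by
        rw [Finset.sum_congr rfl fun e he => Sym2.card_toFinset_of_not_isDiag e
          (G.not_isDiag_of_mem_edgeSet (hM.1 e (Finset.mem_filter.1 he).1))]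
        rw [Finset.sum_const, smul_eq_mul, mul_comm]
    _ = (M'.biUnion Sym2.toFinset).card := (Finset.card_biUnion hdisj).symm
    _ ≤ S.card :=
      Finset.card_le_card (Finset.biUnion_subset.2 fun e he => (Finset.mem_filter.1 he).2)

end Matching

section Coloring

def fanColoring (n t : ℕ) : Sym2 (Fin n) → ℕ :=
  Sym2.lift ⟨fun a b => if min a.val b.val = 0 then max a.val b.val
    else if max a.val b.val ≤ t then n + max a.val b.val else 0,
    fun a b => by simp only [min_comm, max_comm]⟩

variable {n t : ℕ} [NeZero n]

lemma image_fanColoring (ht : 1 ≤ t) (htn : t + 2 ≤ n) :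
    fanColoring n t '' (fan n).edgeSet = ↑(Finset.range n ∪ Finset.Icc (n + 2) (n + t)) := by
  ext x
  simp only [Set.mem_image, Finset.coe_union, Finset.coe_range, Finset.coe_Icc, Set.mem_union,
    Set.mem_Iio, Set.mem_Icc]
  constructor
  · rintro ⟨e, he, rfl⟩
    induction e using Sym2.ind with | _ a b => ?_
    rw [mem_edgeSet, fan_adj] at he
    simp only [fanColoring, Sym2.lift_mk]
    have := a.isLt
    have := b.isLt
    split_ifs <;> omega
  · rintro (hx | ⟨hx₁, hx₂⟩)
    · rcases Nat.eq_zero_or_pos x with rfl | hx₀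
      · refine ⟨s(⟨t, by omega⟩, ⟨t + 1, by omega⟩), ?_, ?_⟩
        · rw [mem_edgeSet, fan_adj]
          simp
        · simp [fanColoring]
          omega
      · refine ⟨s(0, ⟨x, hx⟩), ?_, ?_⟩
        · rw [mem_edgeSet, fan_adj]
          simp
          omega
        · simp [fanColoring]
    · refine ⟨s(⟨x - n - 1, by omega⟩, ⟨x - n, by omega⟩), ?_, ?_⟩
      · rw [mem_edgeSet, fan_adj]
        simp
        omega
      · simp [fanColoring]
        split_ifs <;> omega

lemma ncard_image_fanColoring (ht : 1 ≤ t) (htn : t + 2 ≤ n) :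
    (fanColoring n t '' (fan n).edgeSet).ncard = n + t - 1 := by
  rw [image_fanColoring ht htn, Set.ncard_coe_finset, Finset.card_union_of_disjoint,
    Finset.card_range, Nat.card_Icc]
  · omega
  · exact Finset.disjoint_left.2 fun x hx hx' => by simp at hx hx'; omega

lemma IsRainbowMatching.le_div_two_add_two {m : ℕ} {M : Finset (Sym2 (Fin n))}
    (hM : IsRainbowMatching (fan n) (fanColoring n t) m M) : m ≤ t / 2 + 2 := by
  classical
  obtain ⟨hMatch, rfl, hinj⟩ := hM
  let S : Finset (Fin n) := Finset.univ.filter fun v => 1 ≤ v.val ∧ v.val ≤ t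
  have hS : S.card ≤ t :=
    calc S.card = (S.map Fin.valEmbedding).card := (Finset.card_map _).symm
      _ ≤ (Finset.Icc 1 t).card := Finset.card_le_card fun x hx => by simp [S] at hx ⊢; omega
      _ = t := by simp
  have hcover : M ⊆ M.filter (0 ∈ ·) ∪ M.filter (fanColoring n t · = 0) ∪
      M.filter (·.toFinset ⊆ S) := by
    intro e he
    have hadj := hMatch.1 e he
    induction e using Sym2.ind with | _ a b => ?_
    rw [mem_edgeSet, fan_adj] at hadj
    simp only [Finset.mem_union, Finset.mem_filter, he, true_and]
    simp only [Sym2.mem_iff, Sym2.toFinset_mk_eq, Finset.insert_subset_iff,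
      Finset.singleton_subset_iff, S, Finset.mem_filter, Finset.mem_univ, true_and, fanColoring,
      Sym2.lift_mk, ← Fin.val_inj, Fin.val_zero]
    split_ifs <;> omega
  have h₀ := hMatch.card_filter_mem_le_one 0
  have h₁ : (M.filter (fanColoring n t · = 0)).card ≤ 1 :=
    Finset.card_le_one.2 fun e he f hf => by
      rw [Finset.mem_filter] at he hf
      exact hinj he.1 hf.1 (he.2.trans hf.2.symm)
  have h₂ := hMatch.two_mul_card_filter_subset_le S
  have := Finset.card_le_card hcover
  have := Finset.card_union_le (M.filter (0 ∈ ·) ∪ M.filter (fanColoring n t · = 0))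
    (M.filter (·.toFinset ⊆ S))
  have := Finset.card_union_le (M.filter (0 ∈ ·)) (M.filter (fanColoring n t · = 0))
  omega

end Coloring

/-- `ar(𝒪ₙ, M_k) ≥ n + 2k - 6` for `k ≥ 5`, `n ≥ 2k`: some maximal outerplanar graph on
`n` vertices has a surjective edge-coloring with `n + 2k - 6` colors and no rainbow `M_k`. -/
theorem stmt11 (n k : ℕ) (hk : 5 ≤ k) (hn : 2 * k ≤ n) :
    ∃ (G : SimpleGraph (Fin n)) (c : Sym2 (Fin n) → ℕ), MaximalOuterplanar G ∧
      (c '' G.edgeSet).ncard = n + 2 * k - 6 ∧ ¬ ∃ M, IsRainbowMatching G c k M := by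
  have : NeZero n := ⟨by omega⟩
  refine ⟨fan n, fanColoring n (2 * k - 5), maximalOuterplanar_fan, ?_, fun ⟨M, hM⟩ => ?_⟩
  · rw [ncard_image_fanColoring (by omega) (by omega)]
    omega
  · have := hM.le_div_two_add_two
    omega
end
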